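/- There exist constants C# ≥ 10 and c# > 0 such that the following holds. Let 0 ≤ r₁ ≤ r₂ ≤ r₃ and ρ > 0 be real numbers with R := r₁ + r₂ + r₃ ≥ C#·ρ, let S := r₁² + r₂² + r₃², and let A_ρ be the symmetric 3×3 matrix with all diagonal entries equal to 2S and off-diagonal entries (A_ρ)₁₂ = (R−ρ)·(r₃−r₁−r₂), (A_ρ)₁₃ = (R−ρ)·(r₂−r₃−r₁), (A_ρ)₂₃ = (R−ρ)·(r₁−r₂−r₃). Then for every vector h = (h₁,h₂,h₃) ∈ ℝ³ one has hᵀ·A_ρ·h ≥ c#·ρ·R·(h₁² + h₂² + h₃²); in particular A_ρ is positive definite with smallest eigenvalue at least c#·ρ·R. -/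

import Mathlib

/-!
Write `Q_t(h) = 2S|h|² + t·B(h)` for the quadratic form of the matrix with diagonal `2S` and
off-diagonal coefficients `t·(r₃-r₁-r₂)`, `t·(r₂-r₃-r₁)`, `t·(r₁-r₂-r₃)`, so that `A_ρ` is the
case `t = R - ρ`. At `t = R` the form is a sum of four squares (the Anderson–Chow identity),
hence nonnegative for all real `rᵢ`. Since `Q_t` is affine in `t`,
`R·Q_{R-ρ} = (R-ρ)·Q_R + 2ρS|h|² ≥ 2ρS|h|²`, and `3S ≥ R²` gives `Q_{R-ρ}(h) ≥ (2/3)ρR|h|²`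
whenever `0 < ρ ≤ R`.
-/

open Matrix

namespace AndersonChow

/-- The matrix `A_ρ` of the paper is `matrix r₁ r₂ r₃ (r₁ + r₂ + r₃ - ρ)`. -/
def matrix (r₁ r₂ r₃ t : ℝ) : Matrix (Fin 3) (Fin 3) ℝ :=
  !![2*(r₁^2+r₂^2+r₃^2), t*(r₃-r₁-r₂), t*(r₂-r₃-r₁);
     t*(r₃-r₁-r₂), 2*(r₁^2+r₂^2+r₃^2), t*(r₁-r₂-r₃);
     t*(r₂-r₃-r₁), t*(r₁-r₂-r₃), 2*(r₁^2+r₂^2+r₃^2)]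

def crossForm (r₁ r₂ r₃ : ℝ) (h : Fin 3 → ℝ) : ℝ :=
  2*(r₃-r₁-r₂)*h 0*h 1 + 2*(r₂-r₃-r₁)*h 0*h 2 + 2*(r₁-r₂-r₃)*h 1*h 2

variable (r₁ r₂ r₃ : ℝ)

lemma matrix_isHermitian (t : ℝ) : (matrix r₁ r₂ r₃ t).IsHermitian := by
  ext i j
  fin_cases i <;> fin_cases j <;> simp [matrix]

lemma dotProduct_self_eq (h : Fin 3 → ℝ) : h ⬝ᵥ h = h 0^2 + h 1^2 + h 2^2 := by
  simp only [dotProduct, Fin.sum_univ_three]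
  ring

lemma dotProduct_matrix_mulVec (t : ℝ) (h : Fin 3 → ℝ) :
    h ⬝ᵥ (matrix r₁ r₂ r₃ t *ᵥ h)
      = 2*(r₁^2+r₂^2+r₃^2) * (h ⬝ᵥ h) + t * crossForm r₁ r₂ r₃ h := by
  simp [matrix, crossForm, dotProduct, mulVec, Fin.sum_univ_three]
  ring

lemma quadForm_at_trace_nonneg (h : Fin 3 → ℝ) :
    0 ≤ 2*(r₁^2+r₂^2+r₃^2) * (h ⬝ᵥ h) + (r₁+r₂+r₃) * crossForm r₁ r₂ r₃ h := by
  rw [dotProduct_self_eq, crossForm]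
  nlinarith [sq_nonneg (2*r₁*h 0 - r₁*h 1 - r₁*h 2 - r₂*h 1 + r₂*h 2 + r₃*h 1 - r₃*h 2),
    sq_nonneg (2*r₂*h 0 - r₁*h 1 - r₁*h 2 - r₂*h 1 + r₂*h 2 - r₃*h 1 + r₃*h 2),
    sq_nonneg (2*r₃*h 0 - r₁*h 1 - r₁*h 2 + r₂*h 1 - r₂*h 2 + r₃*h 1 - r₃*h 2),
    sq_nonneg (r₁*h 1 - r₁*h 2 - r₂*h 1 - r₂*h 2 + r₃*h 1 + r₃*h 2)]

lemma sq_add_add_le_three_mul : (r₁+r₂+r₃)^2 ≤ 3*(r₁^2+r₂^2+r₃^2) := by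
  nlinarith [sq_nonneg (r₁-r₂), sq_nonneg (r₁-r₃), sq_nonneg (r₂-r₃)]

lemma le_dotProduct_matrix_mulVec {ρ : ℝ} (hρ : 0 < ρ) (hρR : ρ ≤ r₁+r₂+r₃)
    (h : Fin 3 → ℝ) :
    2/3 * ρ * (r₁+r₂+r₃) * (h ⬝ᵥ h) ≤ h ⬝ᵥ (matrix r₁ r₂ r₃ (r₁+r₂+r₃-ρ) *ᵥ h) := by
  have hR : 0 < r₁+r₂+r₃ := hρ.trans_le hρR
  have hh : 0 ≤ h ⬝ᵥ h := by simpa using dotProduct_star_self_nonneg h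
  have interpolate : (r₁+r₂+r₃) * (h ⬝ᵥ (matrix r₁ r₂ r₃ (r₁+r₂+r₃-ρ) *ᵥ h))
      = (r₁+r₂+r₃-ρ) * (2*(r₁^2+r₂^2+r₃^2) * (h ⬝ᵥ h) + (r₁+r₂+r₃) * crossForm r₁ r₂ r₃ h)
        + 2*ρ*(r₁^2+r₂^2+r₃^2) * (h ⬝ᵥ h) := by
    rw [dotProduct_matrix_mulVec]
    ring
  have hQR := mul_nonneg (sub_nonneg.mpr hρR) (quadForm_at_trace_nonneg r₁ r₂ r₃ h)
  have hS : 2/3 * ρ * (r₁+r₂+r₃)^2 * (h ⬝ᵥ h) ≤ 2*ρ*(r₁^2+r₂^2+r₃^2) * (h ⬝ᵥ h) := by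
    refine mul_le_mul_of_nonneg_right ?_ hh
    nlinarith [sq_add_add_le_three_mul r₁ r₂ r₃]
  refine le_of_mul_le_mul_left ?_ hR
  linarith

lemma matrix_posDef {ρ : ℝ} (hρ : 0 < ρ) (hρR : ρ ≤ r₁+r₂+r₃) :
    (matrix r₁ r₂ r₃ (r₁+r₂+r₃-ρ)).PosDef := by
  refine .of_dotProduct_mulVec_pos (matrix_isHermitian _ _ _ _) fun h hne => ?_
  have hh : 0 < h ⬝ᵥ h :=
    (dotProduct_star_self_nonneg h).lt_of_ne' (by simpa using hne)
  have hR : 0 < r₁+r₂+r₃ := hρ.trans_le hρR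
  simpa using (by positivity : 0 < 2/3 * ρ * (r₁+r₂+r₃) * (h ⬝ᵥ h)).trans_le
    (le_dotProduct_matrix_mulVec r₁ r₂ r₃ hρ hρR h)

end AndersonChow

open AndersonChow in
/-- Theorem B.1 (Kyeongsu Choi's variant of the Anderson–Chow estimate), matrix
form: if `0 ≤ r₁ ≤ r₂ ≤ r₃`, `ρ > 0` and `R = r₁+r₂+r₃ ≥ C#·ρ`, then the matrix
`A_ρ` has quadratic form bounded below by `c#·ρ·R·|h|²`; in particular `A_ρ` is
positive definite. -/
theorem stmt_16 :
    ∃ Csharp : ℝ, 10 ≤ Csharp ∧ ∃ csharp : ℝ, 0 < csharp ∧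
      ∀ r₁ r₂ r₃ ρ : ℝ, 0 ≤ r₁ → r₁ ≤ r₂ → r₂ ≤ r₃ → 0 < ρ →
        Csharp * ρ ≤ r₁ + r₂ + r₃ →
        ∀ A : Matrix (Fin 3) (Fin 3) ℝ,
          A = !![2*(r₁^2+r₂^2+r₃^2), (r₁+r₂+r₃-ρ)*(r₃-r₁-r₂), (r₁+r₂+r₃-ρ)*(r₂-r₃-r₁);
                 (r₁+r₂+r₃-ρ)*(r₃-r₁-r₂), 2*(r₁^2+r₂^2+r₃^2), (r₁+r₂+r₃-ρ)*(r₁-r₂-r₃);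
                 (r₁+r₂+r₃-ρ)*(r₂-r₃-r₁), (r₁+r₂+r₃-ρ)*(r₁-r₂-r₃), 2*(r₁^2+r₂^2+r₃^2)] →
          (∀ h : Fin 3 → ℝ,
            csharp * ρ * (r₁+r₂+r₃) * ((h 0)^2 + (h 1)^2 + (h 2)^2)
              ≤ dotProduct h (A.mulVec h))
          ∧ A.PosDef := by
  refine ⟨10, le_rfl, 2/3, by norm_num, fun r₁ r₂ r₃ ρ _ _ _ hρ hCρ A hA => ?_⟩
  have hρR : ρ ≤ r₁+r₂+r₃ := by linarith
  have hA' : A = matrix r₁ r₂ r₃ (r₁+r₂+r₃-ρ) := hA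
  subst hA'
  refine ⟨fun h => ?_, matrix_posDef r₁ r₂ r₃ hρ hρR⟩
  simpa only [dotProduct_self_eq] using le_dotProduct_matrix_mulVec r₁ r₂ r₃ hρ hρR h
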